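/- arXiv:1511.02021 — 6 statements merged into one kernel-verified Lean document; each statement's English description precedes it below -/
import Mathlib

section
/- Let V be a Hilbert space, a : V × V → ℝ a continuous bilinear form satisfying a(v,v) ≥ C‖v‖² for all v with C > 0, and f ∈ V'. If u ∈ V satisfies a(u,v) = f(v) for all v ∈ V, and V_N ⊆ V is a closed subspace with u_N ∈ V_N satisfying a(u_N, v) = f(v) for all v ∈ V_N, then ‖u - u_N‖ ≤ (‖a‖ / C) · inf_{v ∈ V_N} ‖u - v‖ (Céa's Lemma). -/
/-! Galerkin orthogonality says that `e = u - uN` is `a`-orthogonal to `VN`, so `a e e = a e (u - v)`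
for every `v ∈ VN`. Coercivity and boundedness of `a` then give
`C ‖e‖² ≤ a e (u - v) ≤ ‖a‖ ‖e‖ ‖u - v‖`, and taking the infimum over `v ∈ VN` yields the bound. -/

open Metric

theorem le_mul_infDist {α : Type*} [PseudoMetricSpace α] {x : α} {s : Set α} (hs : s.Nonempty)
    {r c : ℝ} (hc : 0 ≤ c) (h : ∀ y ∈ s, r ≤ c * dist x y) : r ≤ c * infDist x s := by
  rcases hc.eq_or_lt with rfl | hc
  · obtain ⟨y, hy⟩ := hs
    simpa using h y hy
  rw [mul_comm, ← div_le_iff₀ hc, le_infDist hs]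
  intro y hy
  rw [div_le_iff₀ hc, mul_comm]
  exact h y hy

theorem galerkin_orthogonality {𝕜 E F : Type*} [NontriviallyNormedField 𝕜]
    [SeminormedAddCommGroup E] [NormedSpace 𝕜 E] [SeminormedAddCommGroup F] [NormedSpace 𝕜 F]
    (a : E →L[𝕜] E →L[𝕜] F) (f : E →L[𝕜] F) {u uN : E} {VN : Submodule 𝕜 E}
    (hu : ∀ v, a u v = f v) (huN : ∀ v ∈ VN, a uN v = f v) :
    ∀ v ∈ VN, a (u - uN) v = 0 := by
  intro v hv
  rw [map_sub, sub_apply, hu v, huN v hv, sub_self]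

theorem mul_norm_le_of_coercive_of_apply_self_eq {E : Type*} [SeminormedAddCommGroup E]
    [NormedSpace ℝ E] (a : E →L[ℝ] E →L[ℝ] ℝ) {C : ℝ} (hcoer : ∀ v, C * ‖v‖ ^ 2 ≤ a v v)
    {e w : E} (h : a e e = a e w) : C * ‖e‖ ≤ ‖a‖ * ‖w‖ := by
  rcases (norm_nonneg e).eq_or_lt with he | he
  · rw [← he, mul_zero]
    positivity
  have hbound : C * ‖e‖ ^ 2 ≤ ‖a‖ * ‖w‖ * ‖e‖ :=
    calc C * ‖e‖ ^ 2 ≤ a e w := h ▸ hcoer e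
      _ ≤ ‖a‖ * ‖e‖ * ‖w‖ := (le_abs_self _).trans (a.le_opNorm₂ e w)
      _ = ‖a‖ * ‖w‖ * ‖e‖ := by ring
  rw [sq, ← mul_assoc] at hbound
  exact le_of_mul_le_mul_right hbound he

theorem cea_lemma_general {V : Type*} [NormedAddCommGroup V] [InnerProductSpace ℝ V]
    (a : V →L[ℝ] V →L[ℝ] ℝ) (C : ℝ) (hC : 0 < C)
    (hcoer : ∀ v : V, C * ‖v‖ ^ 2 ≤ a v v)
    (f : V →L[ℝ] ℝ) (u : V) (hu : ∀ v : V, a u v = f v)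
    (VN : Submodule ℝ V)
    (uN : V) (huN : uN ∈ VN) (huNsol : ∀ v ∈ VN, a uN v = f v) :
    ‖u - uN‖ ≤ (‖a‖ / C) * Metric.infDist u (VN : Set V) := by
  have horth := galerkin_orthogonality a f hu huNsol
  have hbound : ∀ v ∈ VN, C * ‖u - uN‖ ≤ ‖a‖ * dist u v := by
    intro v hv
    rw [dist_eq_norm]
    refine mul_norm_le_of_coercive_of_apply_self_eq a hcoer ?_
    have hdiff : u - uN - (u - v) = v - uN := by abel
    rw [← sub_eq_zero, ← map_sub, hdiff, horth _ (VN.sub_mem hv huN)]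
  have hinf := le_mul_infDist ⟨uN, huN⟩ (norm_nonneg a) hbound
  rw [div_mul_eq_mul_div, le_div_iff₀ hC]
  linarith

/-- Céa's Lemma for coercive continuous bilinear forms on a Hilbert space. -/
theorem cea_lemma {V : Type*} [NormedAddCommGroup V] [InnerProductSpace ℝ V] [CompleteSpace V]
    (a : V →L[ℝ] V →L[ℝ] ℝ) (C : ℝ) (hC : 0 < C)
    (hcoer : ∀ v : V, C * ‖v‖ ^ 2 ≤ a v v)
    (f : V →L[ℝ] ℝ) (u : V) (hu : ∀ v : V, a u v = f v)
    (VN : Submodule ℝ V) (hVN : IsClosed (VN : Set V))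
    (uN : V) (huN : uN ∈ VN) (huNsol : ∀ v ∈ VN, a uN v = f v) :
    ‖u - uN‖ ≤ (‖a‖ / C) * Metric.infDist u (VN : Set V) :=
  cea_lemma_general a C hC hcoer f u hu VN uN huN huNsol
end

section
/- In ℝ^{2N} with the Euclidean norm, the Kolmogorov N-width of the ℓ¹ unit ball B₁ = {x ∈ ℝ^{2N} : ‖x‖₁ ≤ 1} satisfies d_N(B₁) = ((2N - N)/(2N))^{1/2} = 1/√2. -/
/-!
Lower bound: for an orthonormal basis `b` of an `n`-dimensional space and a subspace `W` of
dimension `k`, Pythagoras and the trace of the orthogonal projection onto `W` give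
`∑ i, dist (b i, W) ^ 2 = n - k`, so some basis vector, a point of the `ℓ¹` ball, lies at distance
at least `√((n - k) / n)` from `W`.

Upper bound: group the `2N` coordinates into `N` pairs and approximate `x` by the vector that
replaces both coordinates of each pair by their mean. The error on a pair `(a, b)` is
`(a - b) ^ 2 / 2 ≤ (|a| + |b|) ^ 2 / 2`, and summing the pairs gives at most `‖x‖₁ ^ 2 / 2`.
-/

open Metric Finset Module Submodule

/-- The Kolmogorov N-width of a subset `M` of a normed space. -/
noncomputable def kolmogorovWidth (V : Type*) [NormedAddCommGroup V] [NormedSpace ℝ V]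
    (N : ℕ) (M : Set V) : ℝ :=
  ⨅ W : {W : Submodule ℝ V // FiniteDimensional ℝ W ∧ Module.finrank ℝ W ≤ N},
    ⨆ v : M, Metric.infDist (v : V) ((W : Submodule ℝ V) : Set V)

section kolmogorovWidth

variable {V : Type*} [NormedAddCommGroup V] [NormedSpace ℝ V] {N : ℕ} {M : Set V}

lemma kolmogorovWidth_le_of_forall_infDist_le (W : Submodule ℝ V) [FiniteDimensional ℝ W]
    (hW : finrank ℝ W ≤ N) {r : ℝ} (hr : 0 ≤ r) (h : ∀ v ∈ M, infDist v W ≤ r) :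
    kolmogorovWidth V N M ≤ r := by
  have hbdd : BddBelow (Set.range fun W : {W : Submodule ℝ V //
      FiniteDimensional ℝ W ∧ finrank ℝ W ≤ N} => ⨆ v : M, infDist (v : V) (W.1 : Set V)) := by
    refine ⟨0, ?_⟩
    rintro _ ⟨U, rfl⟩
    exact Real.iSup_nonneg fun _ => infDist_nonneg
  exact (ciInf_le hbdd ⟨W, inferInstance, hW⟩).trans (Real.iSup_le (fun v => h v v.2) hr)

lemma le_kolmogorovWidth_of_forall_exists (hM : Bornology.IsBounded M) {r : ℝ}
    (h : ∀ W : Submodule ℝ V, FiniteDimensional ℝ W → finrank ℝ W ≤ N →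
      ∃ v ∈ M, r ≤ infDist v W) :
    r ≤ kolmogorovWidth V N M := by
  have : Nonempty {W : Submodule ℝ V // FiniteDimensional ℝ W ∧ finrank ℝ W ≤ N} :=
    ⟨⟨⊥, inferInstance, by simp⟩⟩
  refine le_ciInf fun ⟨W, hfd, hW⟩ => ?_
  obtain ⟨v, hv, hrv⟩ := h W hfd hW
  obtain ⟨R, hR⟩ := hM.subset_closedBall 0
  refine hrv.trans (le_ciSup_of_le ⟨R, ?_⟩ ⟨v, hv⟩ le_rfl)
  rintro _ ⟨u, rfl⟩
  exact (infDist_le_dist_of_mem W.zero_mem).trans (hR u.2)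

end kolmogorovWidth

section OrthonormalBasis

variable {E ι : Type*} [NormedAddCommGroup E] [InnerProductSpace ℝ E] [Fintype ι]

open scoped RealInnerProductSpace

lemma infDist_eq_norm_starProjection_orthogonal (K : Submodule ℝ E) [K.HasOrthogonalProjection]
    (v : E) : infDist v K = ‖Kᗮ.starProjection v‖ := by
  rw [infDist_eq_iInf, starProjection_orthogonal', sub_apply,
    one_apply_eq_self, starProjection_minimal]
  simp only [dist_eq_norm]
  rfl

lemma sum_norm_sq_starProjection (b : OrthonormalBasis ι ℝ E) (K : Submodule ℝ E)
    [FiniteDimensional ℝ K] : ∑ i, ‖K.starProjection (b i)‖ ^ 2 = finrank ℝ K := by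
  let f := stdOrthonormalBasis ℝ K
  have hproj (v : E) : ‖K.starProjection v‖ ^ 2 = ∑ j, ⟪(f j : E), v⟫ ^ 2 := by
    rw [starProjection_apply, ← coe_norm, ← f.sum_sq_inner_right]
    simp only [inner_orthogonalProjectionOnto_eq_of_mem_left]
  calc ∑ i, ‖K.starProjection (b i)‖ ^ 2 = ∑ j, ∑ i, ⟪(f j : E), b i⟫ ^ 2 := by
        simp_rw [hproj]; exact sum_comm
    _ = ∑ j, ‖(f j : E)‖ ^ 2 := sum_congr rfl fun j _ => b.sum_sq_inner_left _
    _ = finrank ℝ K := by simp [← coe_norm, f.orthonormal.1 _]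

lemma sum_infDist_sq (b : OrthonormalBasis ι ℝ E) (K : Submodule ℝ E) [FiniteDimensional ℝ K] :
    ∑ i, infDist (b i) K ^ 2 = Fintype.card ι - finrank ℝ K := by
  have hpyth (v : E) : infDist v K ^ 2 = ‖v‖ ^ 2 - ‖K.starProjection v‖ ^ 2 := by
    rw [infDist_eq_norm_starProjection_orthogonal, K.norm_sq_eq_add_norm_sq_starProjection v]
    ring
  simp_rw [hpyth, b.orthonormal.1 _]
  rw [sum_sub_distrib, sum_norm_sq_starProjection]
  simp

lemma exists_sqrt_le_infDist [Nonempty ι] (b : OrthonormalBasis ι ℝ E) (K : Submodule ℝ E)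
    [FiniteDimensional ℝ K] {N : ℕ} (hK : finrank ℝ K ≤ N) :
    ∃ i, √((Fintype.card ι - N) / Fintype.card ι) ≤ infDist (b i) K := by
  have hn : (0 : ℝ) < Fintype.card ι := by exact_mod_cast Fintype.card_pos
  have hmean : ∑ _ : ι, ((Fintype.card ι : ℝ) - N) / Fintype.card ι
      ≤ ∑ i, infDist (b i) K ^ 2 := by
    rw [sum_infDist_sq, sum_const, card_univ, nsmul_eq_mul, mul_div_cancel₀ _ hn.ne']
    gcongr
  obtain ⟨i, -, hi⟩ := exists_le_of_sum_le univ_nonempty hmean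
  exact ⟨i, (Real.sqrt_le_left infDist_nonneg).2 hi⟩

theorem sqrt_le_kolmogorovWidth [Nonempty ι] (b : OrthonormalBasis ι ℝ E) {M : Set E}
    (hM : Bornology.IsBounded M) (hb : ∀ i, b i ∈ M) (N : ℕ) :
    √((Fintype.card ι - N) / Fintype.card ι) ≤ kolmogorovWidth E N M :=
  le_kolmogorovWidth_of_forall_exists hM fun K _ hK =>
    let ⟨i, hi⟩ := exists_sqrt_le_infDist b K hK
    ⟨b i, hb i, hi⟩

end OrthonormalBasis

section PairAverage

variable {ι κ : Type*} [Fintype ι] [Fintype κ]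

lemma EuclideanSpace.norm_le_sum_abs (x : EuclideanSpace ℝ κ) : ‖x‖ ≤ ∑ k, |x k| := by
  rw [← pow_le_pow_iff_left₀ (norm_nonneg x) (by positivity) two_ne_zero,
    EuclideanSpace.norm_sq_eq]
  simpa only [Real.norm_eq_abs] using sum_sq_le_sq_sum_of_nonneg fun k _ => abs_nonneg (x k)

lemma sum_sq_sub_le_sq_sum_abs_add_abs (a b : ι → ℝ) :
    ∑ j, (a j - b j) ^ 2 ≤ (∑ j, (|a j| + |b j|)) ^ 2 :=
  calc ∑ j, (a j - b j) ^ 2 ≤ ∑ j, (|a j| + |b j|) ^ 2 :=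
        sum_le_sum fun j _ => sq_le_sq.2 ((abs_sub (a j) (b j)).trans (le_abs_self _))
    _ ≤ (∑ j, (|a j| + |b j|)) ^ 2 := sum_sq_le_sq_sum_of_nonneg fun j _ => by positivity

lemma exists_finrank_le_infDist_le_sum_abs_div_sqrt_two (e : Fin 2 × ι ≃ κ) :
    ∃ W : Submodule ℝ (EuclideanSpace ℝ κ), finrank ℝ W ≤ Fintype.card ι ∧
      ∀ x : EuclideanSpace ℝ κ, infDist x W ≤ (∑ k, |x k|) / √2 := by
  let L : (ι → ℝ) →ₗ[ℝ] EuclideanSpace ℝ κ :=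
    (WithLp.linearEquiv 2 ℝ (κ → ℝ)).symm.toLinearMap ∘ₗ
      LinearMap.funLeft ℝ ℝ fun k => (e.symm k).2
  refine ⟨LinearMap.range L, (LinearMap.finrank_range_le L).trans (by simp), fun x => ?_⟩
  have hL (c : ι → ℝ) (k : κ) : L c k = c (e.symm k).2 := rfl
  let a j := x (e (0, j))
  let b j := x (e (1, j))
  have hdist : ‖x - L fun j => (a j + b j) / 2‖ ^ 2 = (∑ j, (a j - b j) ^ 2) / 2 := by
    rw [EuclideanSpace.norm_sq_eq, ← e.sum_comp, Fintype.sum_prod_type, sum_comm, sum_div]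
    refine sum_congr rfl fun j _ => ?_
    simp only [PiLp.sub_apply, hL, Equiv.symm_apply_apply, Real.norm_eq_abs, sq_abs,
      Fin.sum_univ_two, a, b]
    ring
  have hl1 : ∑ j, (|a j| + |b j|) = ∑ k, |x k| := by
    rw [← e.sum_comp, Fintype.sum_prod_type, sum_comm]
    simp [Fin.sum_univ_two, a, b]
  calc infDist x (LinearMap.range L) ≤ ‖x - L fun j => (a j + b j) / 2‖ := by
        rw [← dist_eq_norm]; exact infDist_le_dist_of_mem (LinearMap.mem_range_self L _)
    _ ≤ (∑ k, |x k|) / √2 := by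
        rw [← pow_le_pow_iff_left₀ (norm_nonneg _) (by positivity) two_ne_zero, hdist, div_pow,
          Real.sq_sqrt zero_le_two, ← hl1]
        gcongr
        exact sum_sq_sub_le_sq_sum_abs_add_abs a b

end PairAverage

/-- In `ℝ^{2N}` with the Euclidean norm, the Kolmogorov N-width of the ℓ¹ unit ball
equals `√(N/(2N)) = 1/√2`. -/
theorem kolmogorovWidth_l1_ball (N : ℕ) (hN : 0 < N) :
    kolmogorovWidth (EuclideanSpace ℝ (Fin (2 * N))) N
        {x : EuclideanSpace ℝ (Fin (2 * N)) | ∑ i, |x i| ≤ 1}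
      = Real.sqrt (((2 * N : ℝ) - N) / (2 * N)) ∧
    Real.sqrt (((2 * N : ℝ) - N) / (2 * N)) = 1 / Real.sqrt 2 := by
  have hhalf : √(((2 * N : ℝ) - N) / (2 * N)) = 1 / √2 := by
    have hN' : (N : ℝ) ≠ 0 := by positivity
    rw [show ((2 * N : ℝ) - N) / (2 * N) = 1 / 2 by field_simp; ring, Real.sqrt_div' 1 zero_le_two,
      Real.sqrt_one]
  refine ⟨le_antisymm ?_ ?_, hhalf⟩
  · obtain ⟨W, hW, hdist⟩ := exists_finrank_le_infDist_le_sum_abs_div_sqrt_two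
      (finProdFinEquiv : Fin 2 × Fin N ≃ Fin (2 * N))
    refine kolmogorovWidth_le_of_forall_infDist_le W (by simpa using hW) (Real.sqrt_nonneg _)
      fun x hx => (hdist x).trans ?_
    rw [hhalf]
    gcongr
    exact hx
  · have : Nonempty (Fin (2 * N)) := ⟨⟨0, by omega⟩⟩
    have hbounded : Bornology.IsBounded {x : EuclideanSpace ℝ (Fin (2 * N)) | ∑ i, |x i| ≤ 1} :=
      isBounded_closedBall.subset fun x hx =>
        mem_closedBall_zero_iff.2 ((EuclideanSpace.norm_le_sum_abs x).trans hx)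
    simpa using sqrt_le_kolmogorovWidth (EuclideanSpace.basisFun (Fin (2 * N)) ℝ) hbounded
      (fun i => by simp [apply_ite]) N
end

section
/- If e₁, ..., e_{2N} are pairwise orthogonal unit vectors in a Hilbert space V, then any linear subspace W ⊆ V with dim W ≤ N satisfies sup_{1 ≤ n ≤ 2N} dist(e_n, W) ≥ 1/√2. -/
/-!
Let `P` be the orthogonal projection onto `W`. Then `dist(eᵢ, W)² = 1 - ‖P eᵢ‖²`, and expanding
`‖P eᵢ‖²` in an orthonormal basis of `W` and applying Bessel's inequality to each basis vector
gives `∑ᵢ ‖P eᵢ‖² ≤ dim W ≤ N`. Hence `∑ᵢ dist(eᵢ, W)² ≥ 2N - N = N`, so one of the `2N` terms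
is at least `1/2`.
-/

open Finset

namespace Submodule

variable {𝕜 E : Type*} [RCLike 𝕜] [NormedAddCommGroup E] [InnerProductSpace 𝕜 E]

theorem infDist_eq_norm_sub_starProjection (K : Submodule 𝕜 E) [K.HasOrthogonalProjection]
    (v : E) : Metric.infDist v K = ‖v - K.starProjection v‖ := by
  rw [Metric.infDist_eq_iInf, starProjection_minimal]
  exact iInf_congr fun w => dist_eq_norm _ _

theorem infDist_sq_add_norm_sq_starProjection (K : Submodule 𝕜 E) [K.HasOrthogonalProjection]
    (v : E) : Metric.infDist v K ^ 2 + ‖K.starProjection v‖ ^ 2 = ‖v‖ ^ 2 := by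
  rw [norm_sq_eq_add_norm_sq_starProjection v K, starProjection_orthogonal_val,
    infDist_eq_norm_sub_starProjection, add_comm]

theorem norm_sq_starProjection_eq_sum {ι : Type*} [Fintype ι] {K : Submodule 𝕜 E}
    [K.HasOrthogonalProjection] (b : OrthonormalBasis ι 𝕜 K) (v : E) :
    ‖K.starProjection v‖ ^ 2 = ∑ j, ‖inner 𝕜 (b j : E) v‖ ^ 2 := by
  rw [starProjection_apply, norm_coe, ← b.sum_sq_norm_inner_right]
  simp only [inner_orthogonalProjectionOnto_eq_of_mem_left]

end Submodule

theorem Orthonormal.sum_norm_sq_starProjection_le_finrank {𝕜 E ι : Type*} [RCLike 𝕜]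
    [NormedAddCommGroup E] [InnerProductSpace 𝕜 E] [Fintype ι] {e : ι → E}
    (he : Orthonormal 𝕜 e) (K : Submodule 𝕜 E) [FiniteDimensional 𝕜 K] :
    ∑ i, ‖K.starProjection (e i)‖ ^ 2 ≤ Module.finrank 𝕜 K := by
  let b := stdOrthonormalBasis 𝕜 K
  have bessel (j) : ∑ i, ‖inner 𝕜 (e i) (b j : E)‖ ^ 2 ≤ 1 := by
    simpa [Submodule.norm_coe, b.orthonormal.1 j] using
      he.sum_inner_products_le (b j : E) (s := univ)
  calc ∑ i, ‖K.starProjection (e i)‖ ^ 2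
      = ∑ j, ∑ i, ‖inner 𝕜 (e i) (b j : E)‖ ^ 2 := by
        simp_rw [K.norm_sq_starProjection_eq_sum b, ← inner_conj_symm (e _), RCLike.norm_conj]
        exact sum_comm
    _ ≤ ∑ _j : Fin (Module.finrank 𝕜 K), (1 : ℝ) := sum_le_sum fun j _ => bessel j
    _ = Module.finrank 𝕜 K := by simp

theorem orthonormal_infDist_lower_bound_general {V : Type*} [NormedAddCommGroup V]
    [InnerProductSpace ℝ V]
    (N : ℕ) (hN : 0 < N) (e : Fin (2 * N) → V) (he : Orthonormal ℝ e)
    (W : Submodule ℝ V) (hWfin : FiniteDimensional ℝ W) (hW : Module.finrank ℝ W ≤ N) :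
    1 / Real.sqrt 2 ≤ ⨆ i : Fin (2 * N), Metric.infDist (e i) (W : Set V) := by
  set d := fun i => Metric.infDist (e i) (W : Set V)
  have hsum : ∑ _i : Fin (2 * N), (1 / 2 : ℝ) ≤ ∑ i, d i ^ 2 := by
    have hd (i) : d i ^ 2 = 1 - ‖W.starProjection (e i)‖ ^ 2 := by
      have := W.infDist_sq_add_norm_sq_starProjection (e i)
      rw [he.1 i, one_pow] at this
      linarith
    have hproj := he.sum_norm_sq_starProjection_le_finrank W
    simp only [hd, sum_sub_distrib, sum_const, card_univ, Fintype.card_fin, nsmul_eq_mul]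
    push_cast
    linarith [(Nat.cast_le (α := ℝ)).2 hW]
  have hne : (univ : Finset (Fin (2 * N))).Nonempty := univ_nonempty_iff.2 ⟨⟨0, by omega⟩⟩
  obtain ⟨i, -, hi⟩ := exists_le_of_sum_le hne hsum
  calc 1 / Real.sqrt 2 = Real.sqrt (1 / 2) := by rw [one_div, one_div, Real.sqrt_inv]
    _ ≤ d i := (Real.sqrt_le_left Metric.infDist_nonneg).2 hi
    _ ≤ ⨆ i, d i := le_ciSup (Set.finite_range d).bddAbove i

/-- If `e₁, …, e_{2N}` are pairwise orthogonal unit vectors in a Hilbert space, then any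
subspace of dimension at most `N` misses one of them by at least `1/√2`. -/
theorem orthonormal_infDist_lower_bound {V : Type*} [NormedAddCommGroup V]
    [InnerProductSpace ℝ V] [CompleteSpace V]
    (N : ℕ) (hN : 0 < N) (e : Fin (2 * N) → V) (he : Orthonormal ℝ e)
    (W : Submodule ℝ V) (hWfin : FiniteDimensional ℝ W) (hW : Module.finrank ℝ W ≤ N) :
    1 / Real.sqrt 2 ≤ ⨆ i : Fin (2 * N), Metric.infDist (e i) (W : Set V) :=
  orthonormal_infDist_lower_bound_general N hN e he W hWfin hW
end

section
/- Consider the subset M of c₀(ℕ) ⊂ ℓ^∞(ℕ) consisting of all sequences taking only the values 0 and 1 that converge to 0. Every element of M has ℓ^∞-distance exactly 1/2 to the constant sequence with value 1/2, but for every finite-dimensional subspace W of c₀(ℕ), sup_{v ∈ M} dist_∞(v, W) ≥ 1/2; moreover no finite-dimensional subspace of c₀ achieves sup_{v ∈ M} dist_∞(v, W) < 1/2. -/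
/-!
Let `W` be finite-dimensional. Its ball of radius `2` is compact, and pointwise decay of elements
of `C₀` is uniform on compact sets, so there is `N` with `|w N| < 1/2` whenever `w ∈ W` and
`‖w‖ ≤ 2`. The unit vector `e_N ∈ M` is then at distance at least `|1 - w N| > 1/2` from such
`w`, and at least `‖w‖ - 1 > 1` from the other elements of `W`.
-/

open ZeroAtInfty Filter Metric Set

namespace ZeroAtInftyContinuousMap

variable {X E : Type*} [TopologicalSpace X] [SeminormedAddCommGroup E]

lemma norm_apply_le (f : C₀(X, E)) (x : X) : ‖f x‖ ≤ ‖f‖ :=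
  norm_toBCF_eq_norm (f := f) ▸ f.toBCF.norm_coe_le_norm x

lemma norm_le_of_forall_le {f : C₀(X, E)} {C : ℝ} (hC : 0 ≤ C) (h : ∀ x, ‖f x‖ ≤ C) :
    ‖f‖ ≤ C :=
  norm_toBCF_eq_norm (f := f) ▸ (BoundedContinuousFunction.norm_le hC).2 h

lemma eventually_forall_norm_apply_lt_of_isCompact {K : Set C₀(X, E)} (hK : IsCompact K)
    {ε : ℝ} (hε : 0 < ε) : ∀ᶠ x in cocompact X, ∀ f ∈ K, ‖f x‖ < ε := by
  obtain ⟨t, -, ht, hKt⟩ := hK.finite_cover_balls (half_pos hε)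
  have hsmall : ∀ᶠ x in cocompact X, ∀ g ∈ t, ‖g x‖ < ε / 2 :=
    (eventually_all_finite ht).2 fun g _ =>
      ((zero_at_infty g).eventually_mem (ball_mem_nhds 0 (half_pos hε))).mono
        fun _ hx => mem_ball_zero_iff.1 hx
  filter_upwards [hsmall] with x hx f hf
  obtain ⟨g, hgt, hfg⟩ := mem_iUnion₂.1 (hKt hf)
  calc ‖f x‖ ≤ ‖f x - g x‖ + ‖g x‖ := norm_le_norm_sub_add _ _
    _ ≤ dist f g + ‖g x‖ := by
        gcongr; rw [dist_eq_norm]; exact norm_apply_le (f - g) x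
    _ < ε / 2 + ε / 2 := add_lt_add hfg (hx g hgt)
    _ = ε := add_halves ε

lemma norm_le_one_of_forall_eq_zero_or_eq_one {f : C₀(X, ℝ)} (hf : ∀ x, f x = 0 ∨ f x = 1) :
    ‖f‖ ≤ 1 :=
  norm_le_of_forall_le zero_le_one fun x => by rcases hf x with h | h <;> simp [h]

section single

variable [DiscreteTopology X] [DecidableEq X]

def single (x : X) (b : E) : C₀(X, E) :=
  ⟨⟨Pi.single x b, continuous_of_discreteTopology⟩,
    HasCompactSupport.is_zero_at_infty (f := Pi.single x b) <|
      .intro isCompact_singleton fun _ hy =>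
        Pi.single_eq_of_ne (M := fun _ => E) (mem_singleton_iff.not.1 hy) b⟩

@[simp]
lemma single_apply (x : X) (b : E) (y : X) :
    single x b y = Pi.single (M := fun _ => E) x b y :=
  rfl

lemma norm_single_le (x : X) (b : E) : ‖single x b‖ ≤ ‖b‖ :=
  norm_le_of_forall_le (norm_nonneg b) fun y => by
    rcases eq_or_ne y x with rfl | hy <;> simp [*]

lemma single_one_apply_eq_zero_or_eq_one (x y : X) :
    single x (1 : ℝ) y = 0 ∨ single x (1 : ℝ) y = 1 := by
  rcases eq_or_ne y x with rfl | h <;> simp [*]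

theorem eventually_half_le_infDist_single_one (W : Submodule ℝ C₀(X, ℝ))
    [FiniteDimensional ℝ W] :
    ∀ᶠ x in cocompact X, 1 / 2 ≤ infDist (single x (1 : ℝ)) W := by
  have hK : IsCompact (((↑) : W → C₀(X, ℝ)) '' closedBall 0 2) :=
    (isCompact_closedBall _ _).image continuous_subtype_val
  filter_upwards [eventually_forall_norm_apply_lt_of_isCompact hK one_half_pos] with x hx
  have he_norm : ‖(single x 1 : C₀(X, ℝ))‖ ≤ 1 := (norm_single_le x 1).trans_eq norm_one
  have he_x : (single x 1 : C₀(X, ℝ)) x = 1 := by simp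
  refine (le_infDist ⟨0, W.zero_mem⟩).2 fun w hw => ?_
  rcases le_or_gt ‖w‖ 2 with hw2 | hw2
  · have hwx : ‖w x‖ < 1 / 2 := hx w ⟨⟨w, hw⟩, mem_closedBall_zero_iff.2 hw2, rfl⟩
    calc 1 / 2 ≤ ‖(single x 1 : C₀(X, ℝ)) x‖ - ‖w x‖ := by rw [he_x, norm_one]; linarith
      _ ≤ ‖(single x 1 - w : C₀(X, ℝ)) x‖ := norm_sub_norm_le _ _
      _ ≤ dist (single x 1) w := by rw [dist_eq_norm]; exact norm_apply_le _ x
  · calc 1 / 2 ≤ ‖w‖ - ‖(single x 1 : C₀(X, ℝ))‖ := by linarith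
      _ ≤ dist (single x 1) w := by rw [dist_comm, dist_eq_norm]; exact norm_sub_norm_le _ _

end single

end ZeroAtInftyContinuousMap

open ZeroAtInftyContinuousMap

/-- In `c₀(ℕ)` the set `M` of 0-1 sequences has distance exactly `1/2` to the constant
sequence `1/2`, yet no finite-dimensional subspace approximates `M` with worst-case error
below `1/2`. -/
theorem c0_zero_one_sequences_not_approximable :
    (∀ v ∈ {v : C₀(ℕ, ℝ) | ∀ n, v n = 0 ∨ v n = 1},
      (⨆ n : ℕ, |v n - (1/2 : ℝ)|) = 1/2) ∧
    (∀ W : Submodule ℝ C₀(ℕ, ℝ), FiniteDimensional ℝ W →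
      1/2 ≤ ⨆ v : {v : C₀(ℕ, ℝ) | ∀ n, v n = 0 ∨ v n = 1},
        Metric.infDist (v : C₀(ℕ, ℝ)) (W : Set C₀(ℕ, ℝ))) ∧
    ¬ ∃ W : Submodule ℝ C₀(ℕ, ℝ), FiniteDimensional ℝ W ∧
        (⨆ v : {v : C₀(ℕ, ℝ) | ∀ n, v n = 0 ∨ v n = 1},
          Metric.infDist (v : C₀(ℕ, ℝ)) (W : Set C₀(ℕ, ℝ))) < 1/2 := by
  have sup_ge (W : Submodule ℝ C₀(ℕ, ℝ)) (hW : FiniteDimensional ℝ W) :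
      1/2 ≤ ⨆ v : {v : C₀(ℕ, ℝ) | ∀ n, v n = 0 ∨ v n = 1},
        Metric.infDist (v : C₀(ℕ, ℝ)) (W : Set C₀(ℕ, ℝ)) := by
    obtain ⟨N, hN⟩ := (eventually_half_le_infDist_single_one W).exists
    have hbdd : BddAbove (range fun v : {v : C₀(ℕ, ℝ) | ∀ n, v n = 0 ∨ v n = 1} =>
        infDist (v : C₀(ℕ, ℝ)) W) := by
      refine ⟨1, ?_⟩
      rintro _ ⟨v, rfl⟩
      calc infDist (v : C₀(ℕ, ℝ)) W ≤ dist (v : C₀(ℕ, ℝ)) 0 := infDist_le_dist_of_mem W.zero_mem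
        _ ≤ 1 := (dist_zero_right _).trans_le (norm_le_one_of_forall_eq_zero_or_eq_one v.2)
    exact hN.trans (le_ciSup hbdd ⟨_, single_one_apply_eq_zero_or_eq_one N⟩)
  refine ⟨fun v hv => ?_, sup_ge, fun ⟨W, hW, hlt⟩ => (sup_ge W hW).not_gt hlt⟩
  have h (n : ℕ) : |v n - (1/2 : ℝ)| = 1/2 := by rcases hv n with h | h <;> norm_num [h]
  simp only [h, ciSup_const]
end

section
/- Let V be a Hilbert space, a_μ a family of continuous coercive bilinear forms with condition number κ_μ = ‖a_μ‖/C_{a_μ}, and suppose the greedy algorithm at each step selects a parameter μ* maximizing the residual-based error bound Δ(μ) = (1/C_{a_μ})‖R_μ(u_{N,μ})‖_{V'}. Then the resulting sequence of snapshots Φ(μ*) is a weak greedy sequence for im(Φ) with parameter γ = inf_μ (‖a_μ‖/C_{a_μ})^{-2}, assuming γ > 0. -/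
/-!
The estimator `Δ μ = ‖R μ‖ / C μ` is reliable, `dist(Φ μ, V_N) ≤ ‖Φ μ - u_{N,μ}‖ ≤ Δ μ`, and at
the selected parameter it is efficient up to the squared condition number,
`Δ μ* ≤ (‖a_{μ*}‖ / C_{μ*}) ^ 2 · dist(Φ μ*, V_N)`, by the upper residual bound and Galerkin
quasi-optimality. Maximality of `Δ` at `μ*` then bounds every `dist(Φ μ, V_N)` by
`(‖a_{μ*}‖ / C_{μ*}) ^ 2 · dist(Φ μ*, V_N)`, and `γ ≤ (‖a_{μ*}‖ / C_{μ*}) ^ (-2)`.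
-/

open Metric

theorem mul_iSup_le_of_maximal_estimator {P : Type*} {d Δ : P → ℝ} {μstar : P} {κ γ : ℝ}
    (hd : 0 ≤ d μstar) (hκ : 0 ≤ κ) (hγ : 0 ≤ γ) (hγκ : γ * κ ≤ 1)
    (hrel : ∀ μ, d μ ≤ Δ μ) (hmax : ∀ μ, Δ μ ≤ Δ μstar) (heff : Δ μstar ≤ κ * d μstar) :
    γ * ⨆ μ, d μ ≤ d μstar := by
  have hsup : ⨆ μ, d μ ≤ κ * d μstar :=
    Real.iSup_le (fun μ => ((hrel μ).trans (hmax μ)).trans heff) (mul_nonneg hκ hd)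
  calc γ * ⨆ μ, d μ ≤ γ * (κ * d μstar) := by gcongr
    _ = (γ * κ) * d μstar := by ring
    _ ≤ d μstar := mul_le_of_le_one_left hd hγκ

theorem greedy_with_estimator_is_weak_greedy_general {V : Type*} [NormedAddCommGroup V]
    [InnerProductSpace ℝ V]
    {P : Type*}
    (a : P → V →L[ℝ] V →L[ℝ] ℝ) (C : P → ℝ) (hCpos : ∀ μ, 0 < C μ)
    (Φ : P → V)
    (VN : Submodule ℝ V) (uN : P → V)
    (huN : ∀ μ, uN μ ∈ VN)
    (R : P → V →L[ℝ] ℝ)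
    (hest_low : ∀ μ, C μ * ‖Φ μ - uN μ‖ ≤ ‖R μ‖)
    (hest_up : ∀ μ, ‖R μ‖ ≤ ‖a μ‖ * ‖Φ μ - uN μ‖)
    (hquasi : ∀ μ, ‖Φ μ - uN μ‖ ≤ (‖a μ‖ / C μ) * Metric.infDist (Φ μ) (VN : Set V))
    (γ : ℝ) (hγ : γ = ⨅ μ, ((‖a μ‖ / C μ) ^ 2)⁻¹)
    (μstar : P) (hmax : ∀ μ, (1 / C μ) * ‖R μ‖ ≤ (1 / C μstar) * ‖R μstar‖) :
    γ * (⨆ μ, Metric.infDist (Φ μ) (VN : Set V)) ≤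
      Metric.infDist (Φ μstar) (VN : Set V) := by
  set κ := (‖a μstar‖ / C μstar) ^ 2
  have hγ_nonneg : 0 ≤ γ := hγ ▸ Real.iInf_nonneg fun μ => by positivity
  have hγ_le : γ ≤ κ⁻¹ :=
    hγ ▸ ciInf_le ⟨0, by rintro _ ⟨μ, rfl⟩; positivity⟩ μstar
  refine mul_iSup_le_of_maximal_estimator infDist_nonneg (sq_nonneg _) hγ_nonneg
    ((mul_le_mul_of_nonneg_right hγ_le (sq_nonneg _)).trans inv_mul_le_one)
    (fun μ => ?_) hmax ?_
  · calc infDist (Φ μ) VN ≤ ‖Φ μ - uN μ‖ :=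
          (infDist_le_dist_of_mem (huN μ)).trans_eq (dist_eq_norm ..)
      _ ≤ 1 / C μ * ‖R μ‖ := by
          rw [one_div_mul_eq_div, le_div_iff₀' (hCpos μ)]; exact hest_low μ
  · have hC := (hCpos μstar).le
    calc 1 / C μstar * ‖R μstar‖ ≤ 1 / C μstar * (‖a μstar‖ * ‖Φ μstar - uN μstar‖) := by
          gcongr; exact hest_up μstar
      _ ≤ 1 / C μstar * (‖a μstar‖ * (‖a μstar‖ / C μstar * infDist (Φ μstar) VN)) := by
          gcongr; exact hquasi μstar
      _ = κ * infDist (Φ μstar) VN := by ring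

/-- Selecting the parameter maximizing the residual-based error estimator yields a weak
greedy step with parameter `γ = inf_μ (‖a_μ‖/C_{a_μ})^{-2}`. -/
theorem greedy_with_estimator_is_weak_greedy {V : Type*} [NormedAddCommGroup V]
    [InnerProductSpace ℝ V] [CompleteSpace V]
    {P : Type*} [Nonempty P]
    (a : P → V →L[ℝ] V →L[ℝ] ℝ) (C : P → ℝ) (hCpos : ∀ μ, 0 < C μ)
    (hcoer : ∀ μ (v : V), C μ * ‖v‖ ^ 2 ≤ a μ v v)
    (f : P → V →L[ℝ] ℝ) (Φ : P → V) (hsol : ∀ μ (v : V), a μ (Φ μ) v = f μ v)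
    (VN : Submodule ℝ V) (uN : P → V)
    (huN : ∀ μ, uN μ ∈ VN) (hgal : ∀ μ, ∀ v ∈ VN, a μ (uN μ) v = f μ v)
    (R : P → V →L[ℝ] ℝ) (hR : ∀ μ (w : V), R μ w = f μ w - a μ (uN μ) w)
    (hest_low : ∀ μ, C μ * ‖Φ μ - uN μ‖ ≤ ‖R μ‖)
    (hest_up : ∀ μ, ‖R μ‖ ≤ ‖a μ‖ * ‖Φ μ - uN μ‖)
    (hquasi : ∀ μ, ‖Φ μ - uN μ‖ ≤ (‖a μ‖ / C μ) * Metric.infDist (Φ μ) (VN : Set V))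
    (γ : ℝ) (hγ : γ = ⨅ μ, ((‖a μ‖ / C μ) ^ 2)⁻¹) (hγpos : 0 < γ)
    (μstar : P) (hmax : ∀ μ, (1 / C μ) * ‖R μ‖ ≤ (1 / C μstar) * ‖R μstar‖) :
    γ * (⨆ μ, Metric.infDist (Φ μ) (VN : Set V)) ≤
      Metric.infDist (Φ μstar) (VN : Set V) :=
  greedy_with_estimator_is_weak_greedy_general a C hCpos Φ VN uN huN R hest_low hest_up hquasi γ hγ
    μstar hmax
end

section
/- Let V be a Hilbert space and M ⊆ V a compact subset. Then for every N ∈ ℕ there exists a linear subspace V_N ⊆ V with dim V_N ≤ N such that sup_{v ∈ M} dist(v, V_N) = d_N(M), i.e. an optimal N-dimensional subspace for the Kolmogorov N-width always exists. -/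
/-!
A candidate subspace is encoded by an `N`-tuple of continuous functionals `φ` obeying
Bessel's inequality `∑ i, φ i x ^ 2 ≤ ‖x‖ ^ 2`; its residual at `v` is
`√(‖v‖ ^ 2 - ∑ i, φ i v ^ 2)`.
By Banach–Alaoglu these tuples form a weak-* compact set, on which the supremum over `M` of the
residual is lower semicontinuous, so it attains its minimum. An orthonormal basis of a subspace
`W` of dimension at most `N`, padded with zeros, is such a tuple and its residual is exactly the
distance to `W`. Conversely, the Riesz representatives of any such tuple span a subspace of
dimension at most `N` whose distances are bounded by the residual, by Bessel's inequality applied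
to orthogonal projections. The span for a minimizing tuple is therefore optimal.
-/

open Metric Module Set
open scoped RealInnerProductSpace

section Normed

variable {V : Type*} [NormedAddCommGroup V] [NormedSpace ℝ V]

lemma kolmogorovWidth_eq_of_forall_le {N : ℕ} {M : Set V} (W : Submodule ℝ V)
    [FiniteDimensional ℝ W] (hW : finrank ℝ W ≤ N)
    (hmin : ∀ W' : Submodule ℝ V, FiniteDimensional ℝ W' → finrank ℝ W' ≤ N →
      (⨆ v : M, infDist (v : V) W) ≤ ⨆ v : M, infDist (v : V) W') :
    kolmogorovWidth V N M = ⨆ v : M, infDist (v : V) W := by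
  have : Nonempty {W : Submodule ℝ V // FiniteDimensional ℝ W ∧ finrank ℝ W ≤ N} :=
    ⟨⟨W, inferInstance, hW⟩⟩
  refine le_antisymm ?_ (le_ciInf fun W' ↦ hmin W'.1 W'.2.1 W'.2.2)
  refine ciInf_le ⟨0, ?_⟩ (⟨W, inferInstance, hW⟩ :
    {W : Submodule ℝ V // FiniteDimensional ℝ W ∧ finrank ℝ W ≤ N})
  rintro _ ⟨W', rfl⟩
  exact Real.iSup_nonneg fun _ ↦ infDist_nonneg

variable (V) in
def besselTuples (N : ℕ) : Set (Fin N → WeakDual ℝ V) :=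
  {φ | ∀ x, ∑ i, φ i x ^ 2 ≤ ‖x‖ ^ 2}

lemma zero_mem_besselTuples {N : ℕ} : (0 : Fin N → WeakDual ℝ V) ∈ besselTuples V N :=
  fun x ↦ (Finset.sum_eq_zero fun _ _ ↦ zero_pow two_ne_zero).trans_le (sq_nonneg ‖x‖)

lemma isClosed_besselTuples (N : ℕ) : IsClosed (besselTuples V N) := by
  simp only [besselTuples, ofPred_forall]
  exact isClosed_iInter fun x ↦ isClosed_le (continuous_finsetSum _ fun i _ ↦
    ((WeakDual.eval_continuous x).comp (continuous_apply i)).pow 2) continuous_const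

lemma norm_le_one_of_mem_besselTuples {N : ℕ} {φ : Fin N → WeakDual ℝ V}
    (hφ : φ ∈ besselTuples V N) (i : Fin N) : ‖WeakDual.toStrongDual (φ i)‖ ≤ 1 := by
  refine ContinuousLinearMap.opNorm_le_bound _ zero_le_one fun x ↦ ?_
  rw [one_mul, Real.norm_eq_abs]
  refine abs_le_of_sq_le_sq ?_ (norm_nonneg x)
  exact (Finset.single_le_sum (fun j _ ↦ sq_nonneg (φ j x)) (Finset.mem_univ i)).trans (hφ x)

lemma isCompact_besselTuples (N : ℕ) : IsCompact (besselTuples V N) :=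
  (isCompact_univ_pi fun _ ↦ WeakDual.isCompact_closedBall (0 : StrongDual ℝ V) 1)
    |>.of_isClosed_subset (isClosed_besselTuples N) fun _ hφ ↦ mem_univ_pi.2 fun i ↦
      mem_closedBall_zero_iff.2 (norm_le_one_of_mem_besselTuples hφ i)

noncomputable def besselResidual {N : ℕ} (φ : Fin N → WeakDual ℝ V) (v : V) : ℝ :=
  √(‖v‖ ^ 2 - ∑ i, φ i v ^ 2)

lemma besselResidual_le_norm {N : ℕ} (φ : Fin N → WeakDual ℝ V) (v : V) :
    besselResidual φ v ≤ ‖v‖ := by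
  refine Real.sqrt_le_iff.2 ⟨norm_nonneg v, ?_⟩
  linarith [Finset.sum_nonneg fun i (_ : i ∈ Finset.univ) ↦ sq_nonneg (φ i v)]

lemma continuous_besselResidual {N : ℕ} (v : V) :
    Continuous fun φ : Fin N → WeakDual ℝ V ↦ besselResidual φ v :=
  (continuous_const.sub (continuous_finsetSum _ fun i _ ↦
    ((WeakDual.eval_continuous v).comp (continuous_apply i)).pow 2)).sqrt

lemma bddAbove_range_besselResidual {N : ℕ} {M : Set V} (hM : Bornology.IsBounded M)
    (φ : Fin N → WeakDual ℝ V) : BddAbove (range fun v : M ↦ besselResidual φ v) := by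
  obtain ⟨R, hR⟩ := hM.exists_norm_le
  exact ⟨R, forall_mem_range.2 fun v ↦ (besselResidual_le_norm φ v).trans (hR v v.2)⟩

lemma lowerSemicontinuous_iSup_besselResidual {N : ℕ} {M : Set V}
    (hM : Bornology.IsBounded M) :
    LowerSemicontinuous fun φ : Fin N → WeakDual ℝ V ↦ ⨆ v : M, besselResidual φ v :=
  lowerSemicontinuous_ciSup (bddAbove_range_besselResidual hM) fun v ↦
    (continuous_besselResidual (v : V)).lowerSemicontinuous

end Normed

section InnerProduct

variable {V : Type*} [NormedAddCommGroup V] [InnerProductSpace ℝ V]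

lemma infDist_sq_eq_norm_sq_sub_norm_sq_starProjection (W : Submodule ℝ V)
    [W.HasOrthogonalProjection] (v : V) :
    infDist v W ^ 2 = ‖v‖ ^ 2 - ‖W.starProjection v‖ ^ 2 := by
  have hdist : infDist v W = ‖v - W.starProjection v‖ := by
    rw [infDist_eq_iInf, Submodule.starProjection_minimal]
    simp_rw [dist_eq_norm]
    rfl
  rw [hdist, W.norm_sq_eq_add_norm_sq_starProjection v, Submodule.starProjection_orthogonal_val]
  ring

lemma OrthonormalBasis.sum_sq_inner_eq_norm_sq_starProjection {ι : Type*} [Fintype ι]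
    {W : Submodule ℝ V} [W.HasOrthogonalProjection] (b : OrthonormalBasis ι ℝ W) (x : V) :
    ∑ i, ⟪(b i : V), x⟫ ^ 2 = ‖W.starProjection x‖ ^ 2 := by
  simpa using b.sum_sq_inner_right (W.orthogonalProjectionOnto x)

lemma exists_besselResidual_eq_infDist {N : ℕ} (W : Submodule ℝ V) [FiniteDimensional ℝ W]
    (hW : finrank ℝ W ≤ N) :
    ∃ φ ∈ besselTuples V N, ∀ v, besselResidual φ v = infDist v W := by
  let b := stdOrthonormalBasis ℝ W
  let φ : Fin N → WeakDual ℝ V := Function.extend (Fin.castLE hW)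
    (fun j ↦ StrongDual.toWeakDual (innerSL ℝ (b j : V))) 0
  have hsum : ∀ x, ∑ i, φ i x ^ 2 = ‖W.starProjection x‖ ^ 2 := fun x ↦ by
    refine .trans ?_ (b.sum_sq_inner_eq_norm_sq_starProjection x)
    refine (Fintype.sum_of_injective _ (Fin.castLE_injective hW) _ _ (fun i hi ↦ ?_)
      fun j ↦ ?_).symm
    · rw [show φ i = 0 from Function.extend_apply' _ _ _ hi]
      exact zero_pow two_ne_zero
    · simp [φ, (Fin.castLE_injective hW).extend_apply]
  refine ⟨φ, fun x ↦ ?_, fun v ↦ ?_⟩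
  · rw [hsum]
    exact pow_le_pow_left₀ (norm_nonneg _) (W.norm_starProjection_apply_le x) 2
  · rw [besselResidual, hsum, ← infDist_sq_eq_norm_sq_sub_norm_sq_starProjection,
      Real.sqrt_sq infDist_nonneg]

lemma exists_infDist_le_besselResidual [CompleteSpace V] {N : ℕ} {φ : Fin N → WeakDual ℝ V}
    (hφ : φ ∈ besselTuples V N) :
    ∃ W : Submodule ℝ V, FiniteDimensional ℝ W ∧ finrank ℝ W ≤ N ∧
      ∀ v, infDist v W ≤ besselResidual φ v := by
  let u : Fin N → V := fun i ↦
    (InnerProductSpace.toDual ℝ V).symm (WeakDual.toStrongDual (φ i))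
  let W := Submodule.span ℝ (range u)
  have hWfin : FiniteDimensional ℝ W := FiniteDimensional.span_of_finite ℝ (finite_range u)
  have hu : ∀ i x, φ i x = ⟪u i, x⟫ := fun i x ↦ InnerProductSpace.toDual_symm_apply.symm
  refine ⟨W, hWfin, (finrank_range_le_card u).trans_eq (Fintype.card_fin N), fun v ↦ ?_⟩
  have hproj : ∀ i, φ i v = φ i (W.starProjection v) := fun i ↦ by
    have hui : u i ∈ W := Submodule.subset_span (mem_range_self i)
    rw [hu, hu, Submodule.starProjection_apply,
      ← Submodule.inner_orthogonalProjectionOnto_eq_of_mem_left ⟨u i, hui⟩]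
    rfl
  refine Real.le_sqrt_of_sq_le ?_
  rw [infDist_sq_eq_norm_sq_sub_norm_sq_starProjection,
    Finset.sum_congr rfl fun i _ ↦ by rw [hproj i]]
  linarith [hφ (W.starProjection v)]

end InnerProduct

theorem exists_optimal_subspace_general {V : Type*} [NormedAddCommGroup V] [InnerProductSpace ℝ V]
    [CompleteSpace V] (M : Set V) (hM : IsCompact M) (N : ℕ) :
    ∃ W : Submodule ℝ V, FiniteDimensional ℝ W ∧ Module.finrank ℝ W ≤ N ∧
      (⨆ v : M, Metric.infDist (v : V) (W : Set V)) = kolmogorovWidth V N M := by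
  obtain ⟨φ, hφ, hφmin⟩ :=
    (lowerSemicontinuous_iSup_besselResidual hM.isBounded).lowerSemicontinuousOn _
      |>.exists_isMinOn ⟨0, zero_mem_besselTuples⟩ (isCompact_besselTuples N)
  obtain ⟨W, hWfin, hWN, hWφ⟩ := exists_infDist_le_besselResidual hφ
  refine ⟨W, hWfin, hWN, (kolmogorovWidth_eq_of_forall_le W hWN fun W' _ hW'N ↦ ?_).symm⟩
  obtain ⟨ψ, hψ, hψW'⟩ := exists_besselResidual_eq_infDist W' hW'N
  calc (⨆ v : M, infDist (v : V) W)
      ≤ ⨆ v : M, besselResidual φ v :=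
        ciSup_mono (bddAbove_range_besselResidual hM.isBounded φ) fun v ↦ hWφ v
    _ ≤ ⨆ v : M, besselResidual ψ v := hφmin hψ
    _ = ⨆ v : M, infDist (v : V) W' := by simp_rw [hψW']

/-- For a compact subset of a Hilbert space, an optimal subspace for the Kolmogorov
N-width always exists. -/
theorem exists_optimal_subspace {V : Type*} [NormedAddCommGroup V] [InnerProductSpace ℝ V]
    [CompleteSpace V] (M : Set V) (hM : IsCompact M) (hne : M.Nonempty) (N : ℕ) :
    ∃ W : Submodule ℝ V, FiniteDimensional ℝ W ∧ Module.finrank ℝ W ≤ N ∧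
      (⨆ v : M, Metric.infDist (v : V) (W : Set V)) = kolmogorovWidth V N M :=
  exists_optimal_subspace_general M hM N
end
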